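/- Let V be a multiplicative unitary of multiplicity 1 on a finite-dimensional Hilbert space H, and let f, g be pre-subgroups with g ≺ f. Then L_g f = ⟨g,f⟩·g and ⟨g,e⟩ = ⟨g,f⟩·⟨f,e⟩, where L_g = L(ω_{g,g}). -/

import Mathlib

open scoped InnerProductSpace ComplexOrder

noncomputable section

namespace MU

variable {ι : Type*} [Fintype ι] [DecidableEq ι]

/-- The elementary tensor `f ⊗ g` of two vectors, in the model
`H ⊗ H = EuclideanSpace ℂ (ι × ι)`. -/
def tens (f g : EuclideanSpace ℂ ι) : EuclideanSpace ℂ (ι × ι) :=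
  WithLp.toLp 2 fun p => f p.1 * g p.2

/-- `g ↦ f ⊗ g` as a linear map. -/
def tensL (f : EuclideanSpace ℂ ι) :
    EuclideanSpace ℂ ι →ₗ[ℂ] EuclideanSpace ℂ (ι × ι) where
  toFun g := tens f g
  map_add' x y := PiLp.ext fun p => by
    show f p.1 * (x + y) p.2 = f p.1 * x p.2 + f p.1 * y p.2
    rw [PiLp.add_apply]; ring
  map_smul' c x := PiLp.ext fun p => by
    show f p.1 * (c • x) p.2 = (c • (tens f x : EuclideanSpace ℂ (ι × ι))) p
    rw [PiLp.smul_apply, PiLp.smul_apply, smul_eq_mul, smul_eq_mul]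
    show f p.1 * (c * x p.2) = c * (f p.1 * x p.2)
    ring

/-- `f ↦ f ⊗ g` as a linear map. -/
def tensR (g : EuclideanSpace ℂ ι) :
    EuclideanSpace ℂ ι →ₗ[ℂ] EuclideanSpace ℂ (ι × ι) where
  toFun f := tens f g
  map_add' x y := PiLp.ext fun p => by
    show (x + y) p.1 * g p.2 = x p.1 * g p.2 + y p.1 * g p.2
    rw [PiLp.add_apply]; ring
  map_smul' c x := PiLp.ext fun p => by
    show (c • x) p.1 * g p.2 = (c • (tens x g : EuclideanSpace ℂ (ι × ι))) p
    rw [PiLp.smul_apply, PiLp.smul_apply, smul_eq_mul, smul_eq_mul]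
    show (c * x p.1) * g p.2 = c * (x p.1 * g p.2)
    ring

/-- Action of a matrix on a Euclidean space vector. -/
def appM {κ : Type*} [Fintype κ] (M : Matrix κ κ ℂ) (v : EuclideanSpace ℂ κ) :
    EuclideanSpace ℂ κ :=
  WithLp.toLp 2 fun i => ∑ j, M i j * v j

/-- Action of a matrix as a linear map on the Euclidean space. -/
def mact {κ : Type*} [Fintype κ] (M : Matrix κ κ ℂ) :
    EuclideanSpace ℂ κ →ₗ[ℂ] EuclideanSpace ℂ κ where
  toFun := appM M
  map_add' x y := PiLp.ext fun i => by
    show ∑ j, M i j * (x + y) j = (appM M x + appM M y) i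
    rw [PiLp.add_apply]
    show ∑ j, M i j * (x + y) j = (∑ j, M i j * x j) + ∑ j, M i j * y j
    rw [← Finset.sum_add_distrib]
    refine Finset.sum_congr rfl fun j _ => ?_
    rw [PiLp.add_apply]; ring
  map_smul' c x := PiLp.ext fun i => by
    show ∑ j, M i j * (c • x) j = (c • appM M x) i
    rw [PiLp.smul_apply, smul_eq_mul]
    show ∑ j, M i j * (c • x) j = c * ∑ j, M i j * x j
    rw [Finset.mul_sum]
    refine Finset.sum_congr rfl fun j _ => ?_
    rw [PiLp.smul_apply, smul_eq_mul]; ring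

/-- The leg `V₁₂` on `H ⊗ H ⊗ H`. -/
def leg12 (V : Matrix (ι × ι) (ι × ι) ℂ) : Matrix (ι × ι × ι) (ι × ι × ι) ℂ :=
  fun p q => V (p.1, p.2.1) (q.1, q.2.1) * (if p.2.2 = q.2.2 then 1 else 0)

/-- The leg `V₁₃` on `H ⊗ H ⊗ H`. -/
def leg13 (V : Matrix (ι × ι) (ι × ι) ℂ) : Matrix (ι × ι × ι) (ι × ι × ι) ℂ :=
  fun p q => V (p.1, p.2.2) (q.1, q.2.2) * (if p.2.1 = q.2.1 then 1 else 0)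

/-- The leg `V₂₃` on `H ⊗ H ⊗ H`. -/
def leg23 (V : Matrix (ι × ι) (ι × ι) ℂ) : Matrix (ι × ι × ι) (ι × ι × ι) ℂ :=
  fun p q => V (p.2.1, p.2.2) (q.2.1, q.2.2) * (if p.1 = q.1 then 1 else 0)

/-- The pentagon equation `V₁₂ V₁₃ V₂₃ = V₂₃ V₁₂`. -/
def Pentagon (V : Matrix (ι × ι) (ι × ι) ℂ) : Prop :=
  leg12 V * leg13 V * leg23 V = leg23 V * leg12 V

/-- `V` is a multiplicative unitary: a unitary satisfying the pentagon equation. -/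
def IsMU (V : Matrix (ι × ι) (ι × ι) ℂ) : Prop :=
  V * V.conjTranspose = 1 ∧ V.conjTranspose * V = 1 ∧ Pentagon V

/-- `ξ` is a fixed vector for `V`. -/
def Fixed (V : Matrix (ι × ι) (ι × ι) ℂ) (ξ : EuclideanSpace ℂ ι) : Prop :=
  ∀ η, mact V (tens ξ η) = tens ξ η

/-- `ξ` is a cofixed vector for `V`. -/
def Cofixed (V : Matrix (ι × ι) (ι × ι) ℂ) (ξ : EuclideanSpace ℂ ι) : Prop :=
  ∀ η, mact V (tens η ξ) = tens η ξ

/-- `V` has multiplicity 1, with fixed unit vector `e` and cofixed unit vector `eHat`. -/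
def Mult1 (V : Matrix (ι × ι) (ι × ι) ℂ) (e eHat : EuclideanSpace ℂ ι) : Prop :=
  ‖e‖ = 1 ∧ ‖eHat‖ = 1 ∧ Fixed V e ∧ Cofixed V eHat ∧
    (∀ ξ, Fixed V ξ → ∃ c : ℂ, ξ = c • e) ∧
    (∀ ξ, Cofixed V ξ → ∃ c : ℂ, ξ = c • eHat)

/-- A pre-subgroup of `V` (with fixed vector `e`): a unit vector `f` with
`⟨f,e⟩ > 0` and `V(f⊗f) = f⊗f`. -/
def IsPreSubgroup (V : Matrix (ι × ι) (ι × ι) ℂ) (e f : EuclideanSpace ℂ ι) : Prop :=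
  ‖f‖ = 1 ∧ 0 < ⟪f, e⟫_ℂ ∧ mact V (tens f f) = tens f f

/-- The subspace `H^f = {η : V(f⊗η) = f⊗η}`. -/
def subUp (V : Matrix (ι × ι) (ι × ι) ℂ) (f : EuclideanSpace ℂ ι) :
    Submodule ℂ (EuclideanSpace ℂ ι) :=
  LinearMap.ker ((mact V).comp (tensL f) - tensL f)

/-- The subspace `H_f = {η : V(η⊗f) = η⊗f}`. -/
def subDown (V : Matrix (ι × ι) (ι × ι) ℂ) (f : EuclideanSpace ℂ ι) :
    Submodule ℂ (EuclideanSpace ℂ ι) :=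
  LinearMap.ker ((mact V).comp (tensR f) - tensR f)

/-- The slice `L(ω_{ξ,η}) = (ω_{ξ,η} ⊗ id)(V)`. -/
def Lslice (V : Matrix (ι × ι) (ι × ι) ℂ) (ξ η : EuclideanSpace ℂ ι) : Matrix ι ι ℂ :=
  fun a b => ∑ x, ∑ y, (starRingEnd ℂ) (ξ x) * η y * V (x, a) (y, b)

/-- The slice `ρ(ω_{ξ,η}) = (id ⊗ ω_{ξ,η})(V)`. -/
def Rslice (V : Matrix (ι × ι) (ι × ι) ℂ) (ξ η : EuclideanSpace ℂ ι) : Matrix ι ι ℂ :=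
  fun a b => ∑ x, ∑ y, (starRingEnd ℂ) (ξ x) * η y * V (a, x) (b, y)

/-- The slice `L(ω) = (ω ⊗ id)(V)` of a general linear functional `ω` on `L(H)`. -/
def LslF (V : Matrix (ι × ι) (ι × ι) ℂ) (ω : Matrix ι ι ℂ →ₗ[ℂ] ℂ) : Matrix ι ι ℂ :=
  fun a b => ω (fun x y => V (x, a) (y, b))

/-- A state on `L(H)`: a unital positive linear functional. -/
def IsState (ω : Matrix ι ι ℂ →ₗ[ℂ] ℂ) : Prop :=
  ω 1 = 1 ∧ ∀ M : Matrix ι ι ℂ, M.PosSemidef → ∃ r : ℝ, 0 ≤ r ∧ ω M = r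


/-!
Write `L_k = (ω_{k,k} ⊗ id)(V)`, `ρ_k = (id ⊗ ω_{k,k})(V)`, `H^k = {η : V(k ⊗ η) = k ⊗ η}` and
`H_k = {η : V(η ⊗ k) = η ⊗ k}`. For a unit vector `k` with `V(k ⊗ k) = k ⊗ k` the pentagon
equation, evaluated on elementary tensors of `H ⊗ H ⊗ H`, shows that `L_k` is an idempotent with
range in `H^k` that maps `H_k` into itself, that `ρ_k` is an idempotent with range in `H_k`, and
that `V` is the identity on `H_k ⊗ H^k`. For `k = e` every `η` lies in `H^e`, so the range of `ρ_e`
consists of fixed vectors and multiplicity one gives `ρ_e χ = ⟨e, χ⟩ e`.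

If `y ≠ 0` lies in `H^k ∩ H_k` and is orthogonal to `e`, its normalisation `h` satisfies
`V(h ⊗ h) = h ⊗ h` and `⟨e, L_h e⟩ = ⟨h, ρ_e h⟩ = 0`; as `L_h e ∈ H^h` this forces `L_h e = 0`,
while `k ∈ H^h` gives `⟨k, e⟩ = ⟨k, L_h e⟩`. So when `⟨k, e⟩ ≠ 0` the vector `L_k F ∈ H^k ∩ H_k`
(for `F ∈ H_k`) is a multiple of `k`, namely `⟨k, F⟩ k`. This is the first claim for `k = g`,
`F = f`; for `k = f`, `F = e`, pairing with `g ∈ H^f` gives the second.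
-/

open scoped Matrix

lemma sum_sum_sum_rotate {α β γ M : Type*} [Fintype α] [Fintype β] [Fintype γ]
    [AddCommMonoid M] (f : α → β → γ → M) :
    ∑ a, ∑ b, ∑ c, f a b c = ∑ b, ∑ c, ∑ a, f a b c := by
  rw [Finset.sum_comm]
  exact Finset.sum_congr rfl fun _ _ => Finset.sum_comm

section MatrixAction

variable {κ : Type*} [Fintype κ]

lemma mact_apply (A : Matrix κ κ ℂ) (x : EuclideanSpace ℂ κ) (i : κ) :
    mact A x i = ∑ j, A i j * x j := rfl

lemma inner_mact_left (A : Matrix κ κ ℂ) (x y : EuclideanSpace ℂ κ) :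
    ⟪mact A x, y⟫_ℂ = ⟪x, mact Aᴴ y⟫_ℂ := by
  simp only [PiLp.inner_apply, mact_apply, RCLike.inner_apply, Matrix.conjTranspose_apply,
    map_sum, map_mul, Finset.mul_sum, Finset.sum_mul, RCLike.star_def]
  rw [Finset.sum_comm]
  exact Finset.sum_congr rfl fun i _ => Finset.sum_congr rfl fun j _ => by ring

lemma inner_mact_right (A : Matrix κ κ ℂ) (x y : EuclideanSpace ℂ κ) :
    ⟪x, mact A y⟫_ℂ = ⟪mact Aᴴ x, y⟫_ℂ := by
  rw [inner_mact_left, Matrix.conjTranspose_conjTranspose]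

lemma mact_mul_apply (A B : Matrix κ κ ℂ) (x : EuclideanSpace ℂ κ) :
    mact (A * B) x = mact A (mact B x) :=
  congrArg (WithLp.toLp 2) (Matrix.mulVec_mulVec _ _ _).symm

lemma mact_one [DecidableEq κ] (x : EuclideanSpace ℂ κ) : mact (1 : Matrix κ κ ℂ) x = x :=
  congrArg (WithLp.toLp 2) (Matrix.one_mulVec _)

lemma mact_mact_of_mul_eq_one [DecidableEq κ] {U U' : Matrix κ κ ℂ} (h : U' * U = 1)
    (x : EuclideanSpace ℂ κ) : mact U' (mact U x) = x := by
  rw [← mact_mul_apply, h, mact_one]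

lemma mact_eq_self_of_mul_eq_one [DecidableEq κ] {U U' : Matrix κ κ ℂ} (h : U' * U = 1)
    {x : EuclideanSpace ℂ κ} (hx : mact U x = x) : mact U' x = x := by
  conv_lhs => rw [← hx]
  exact mact_mact_of_mul_eq_one h x

lemma inner_mact_mact [DecidableEq κ] {U : Matrix κ κ ℂ} (hU : Uᴴ * U = 1)
    (x y : EuclideanSpace ℂ κ) : ⟪mact U x, mact U y⟫_ℂ = ⟪x, y⟫_ℂ := by
  rw [inner_mact_left, mact_mact_of_mul_eq_one hU]

lemma mact_eq_self_of_inner_eq [DecidableEq κ] {U : Matrix κ κ ℂ} (hU : Uᴴ * U = 1)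
    {x : EuclideanSpace ℂ κ} (h : ⟪x, mact U x⟫_ℂ = ⟪x, x⟫_ℂ) : mact U x = x := by
  have hnorm : ‖mact U x‖ = ‖x‖ := by
    rw [norm_eq_sqrt_re_inner (𝕜 := ℂ), norm_eq_sqrt_re_inner (𝕜 := ℂ) x, inner_mact_mact hU]
  have hre : RCLike.re ⟪mact U x, x⟫_ℂ = ‖x‖ ^ 2 := by
    rw [inner_re_symm, h, inner_self_eq_norm_sq]
  rw [← sub_eq_zero, ← norm_eq_zero, ← sq_eq_zero_iff, norm_sub_sq (𝕜 := ℂ), hre, hnorm]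
  ring

end MatrixAction

section Tensor

variable {κ : Type*}

-- `tensIJ` puts a vector of `H ⊗ H` into the legs `I, J` of `H ⊗ H ⊗ H`, where `legIJ` acts on it.
def tens12 (w : EuclideanSpace ℂ (κ × κ)) (c : EuclideanSpace ℂ κ) :
    EuclideanSpace ℂ (κ × κ × κ) :=
  WithLp.toLp 2 fun p => w (p.1, p.2.1) * c p.2.2

def tens23 (a : EuclideanSpace ℂ κ) (w : EuclideanSpace ℂ (κ × κ)) :
    EuclideanSpace ℂ (κ × κ × κ) :=
  WithLp.toLp 2 fun p => a p.1 * w p.2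

def tens13 (w : EuclideanSpace ℂ (κ × κ)) (b : EuclideanSpace ℂ κ) :
    EuclideanSpace ℂ (κ × κ × κ) :=
  WithLp.toLp 2 fun p => w (p.1, p.2.2) * b p.2.1

lemma tens23_tens (a b c : EuclideanSpace ℂ κ) : tens23 a (tens b c) = tens12 (tens a b) c := by
  ext p; simp only [tens23, tens12, tens]; ring

lemma tens13_tens (a b c : EuclideanSpace ℂ κ) : tens13 (tens a c) b = tens12 (tens a b) c := by
  ext p; simp only [tens13, tens12, tens]; ring

variable [Fintype κ]

lemma inner_tens (a b c d : EuclideanSpace ℂ κ) :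
    ⟪tens a b, tens c d⟫_ℂ = ⟪a, c⟫_ℂ * ⟪b, d⟫_ℂ := by
  simp only [PiLp.inner_apply, Fintype.sum_prod_type, Finset.sum_mul_sum, RCLike.inner_apply,
    tens, map_mul]
  exact Finset.sum_congr rfl fun i _ => Finset.sum_congr rfl fun j _ => by ring

def contractFst (k : EuclideanSpace ℂ κ) (w : EuclideanSpace ℂ (κ × κ)) : EuclideanSpace ℂ κ :=
  WithLp.toLp 2 fun c => ∑ x, starRingEnd ℂ (k x) * w (x, c)

def contractSnd (k : EuclideanSpace ℂ κ) (w : EuclideanSpace ℂ (κ × κ)) : EuclideanSpace ℂ κ :=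
  WithLp.toLp 2 fun a => ∑ y, starRingEnd ℂ (k y) * w (a, y)

lemma inner_contractFst (k μ : EuclideanSpace ℂ κ) (w : EuclideanSpace ℂ (κ × κ)) :
    ⟪μ, contractFst k w⟫_ℂ = ⟪tens k μ, w⟫_ℂ := by
  simp only [PiLp.inner_apply, Fintype.sum_prod_type, RCLike.inner_apply, contractFst, tens,
    map_mul, Finset.sum_mul]
  rw [Finset.sum_comm]
  exact Finset.sum_congr rfl fun i _ => Finset.sum_congr rfl fun j _ => by ring

lemma inner_contractSnd (k μ : EuclideanSpace ℂ κ) (w : EuclideanSpace ℂ (κ × κ)) :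
    ⟪μ, contractSnd k w⟫_ℂ = ⟪tens μ k, w⟫_ℂ := by
  simp only [PiLp.inner_apply, Fintype.sum_prod_type, RCLike.inner_apply, contractSnd, tens,
    map_mul, Finset.sum_mul]
  exact Finset.sum_congr rfl fun i _ => Finset.sum_congr rfl fun j _ => by ring

lemma inner_tens12 (w z : EuclideanSpace ℂ (κ × κ)) (c d : EuclideanSpace ℂ κ) :
    ⟪tens12 w c, tens12 z d⟫_ℂ = ⟪w, z⟫_ℂ * ⟪c, d⟫_ℂ := by
  simp only [PiLp.inner_apply, Fintype.sum_prod_type, RCLike.inner_apply,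
    tens12, map_mul, Finset.sum_mul, Finset.mul_sum]
  conv_rhs => rw [sum_sum_sum_rotate]
  exact Finset.sum_congr rfl fun i _ => Finset.sum_congr rfl fun j _ =>
    Finset.sum_congr rfl fun l _ => by ring

lemma inner_tens23 (a b : EuclideanSpace ℂ κ) (w z : EuclideanSpace ℂ (κ × κ)) :
    ⟪tens23 a w, tens23 b z⟫_ℂ = ⟪a, b⟫_ℂ * ⟪w, z⟫_ℂ := by
  simp only [PiLp.inner_apply, Fintype.sum_prod_type, RCLike.inner_apply,
    tens23, map_mul, Finset.sum_mul, Finset.mul_sum]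
  conv_rhs => rw [← sum_sum_sum_rotate]
  exact Finset.sum_congr rfl fun i _ => Finset.sum_congr rfl fun j _ =>
    Finset.sum_congr rfl fun l _ => by ring

lemma inner_tens13 (w z : EuclideanSpace ℂ (κ × κ)) (b d : EuclideanSpace ℂ κ) :
    ⟪tens13 w b, tens13 z d⟫_ℂ = ⟪w, z⟫_ℂ * ⟪b, d⟫_ℂ := by
  simp only [PiLp.inner_apply, Fintype.sum_prod_type, RCLike.inner_apply,
    tens13, map_mul, Finset.sum_mul, Finset.mul_sum]
  conv_rhs => rw [Finset.sum_comm]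
  exact Finset.sum_congr rfl fun i _ => Finset.sum_congr rfl fun j _ =>
    Finset.sum_congr rfl fun l _ => by ring

lemma inner_tens_contractFst_right (a k : EuclideanSpace ℂ κ) (w s : EuclideanSpace ℂ (κ × κ)) :
    ⟪w, tens a (contractFst k s)⟫_ℂ = ⟪tens13 w k, tens23 a s⟫_ℂ := by
  simp only [PiLp.inner_apply, Fintype.sum_prod_type, RCLike.inner_apply,
    tens13, tens23, tens, contractFst, map_mul, Finset.sum_mul, Finset.mul_sum]
  refine Finset.sum_congr rfl fun i _ => ?_
  rw [Finset.sum_comm]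
  exact Finset.sum_congr rfl fun j _ => Finset.sum_congr rfl fun l _ => by ring

lemma inner_tens_contractFst_left (b k : EuclideanSpace ℂ κ) (y u : EuclideanSpace ℂ (κ × κ)) :
    ⟪y, tens (contractFst k u) b⟫_ℂ = ⟪tens23 k y, tens12 u b⟫_ℂ := by
  simp only [PiLp.inner_apply, Fintype.sum_prod_type, RCLike.inner_apply,
    tens12, tens23, tens, contractFst, map_mul, Finset.sum_mul]
  conv_rhs => rw [sum_sum_sum_rotate]
  exact Finset.sum_congr rfl fun i _ => Finset.sum_congr rfl fun j _ =>
    Finset.sum_congr rfl fun l _ => by ring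

lemma inner_tens_contractSnd_left (b k : EuclideanSpace ℂ κ) (w s : EuclideanSpace ℂ (κ × κ)) :
    ⟪w, tens (contractSnd k s) b⟫_ℂ = ⟪tens12 w k, tens13 s b⟫_ℂ := by
  simp only [PiLp.inner_apply, Fintype.sum_prod_type, RCLike.inner_apply,
    tens12, tens13, tens, contractSnd, map_mul, Finset.sum_mul]
  exact Finset.sum_congr rfl fun i _ => Finset.sum_congr rfl fun j _ =>
    Finset.sum_congr rfl fun l _ => by ring

end Tensor

section Slice

variable {κ : Type*} [Fintype κ]

lemma mact_Lslice (V : Matrix (κ × κ) (κ × κ) ℂ) (ξ η χ : EuclideanSpace ℂ κ) :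
    mact (Lslice V ξ η) χ = contractFst ξ (mact V (tens η χ)) := by
  ext a
  simp only [mact_apply, Lslice, contractFst, tens, Fintype.sum_prod_type, Finset.mul_sum,
    Finset.sum_mul]
  rw [Finset.sum_comm]
  refine Finset.sum_congr rfl fun x _ => ?_
  rw [Finset.sum_comm]
  exact Finset.sum_congr rfl fun y _ => Finset.sum_congr rfl fun b _ => by ring

lemma mact_Rslice (V : Matrix (κ × κ) (κ × κ) ℂ) (ξ η χ : EuclideanSpace ℂ κ) :
    mact (Rslice V ξ η) χ = contractSnd ξ (mact V (tens χ η)) := by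
  ext a
  simp only [mact_apply, Rslice, contractSnd, tens, Fintype.sum_prod_type, Finset.mul_sum,
    Finset.sum_mul]
  rw [Finset.sum_comm]
  exact Finset.sum_congr rfl fun x _ => Finset.sum_congr rfl fun y _ =>
    Finset.sum_congr rfl fun b _ => by ring

lemma inner_mact_Lslice (V : Matrix (κ × κ) (κ × κ) ℂ) (ξ η μ χ : EuclideanSpace ℂ κ) :
    ⟪μ, mact (Lslice V ξ η) χ⟫_ℂ = ⟪tens ξ μ, mact V (tens η χ)⟫_ℂ := by
  rw [mact_Lslice, inner_contractFst]

lemma inner_mact_Rslice (V : Matrix (κ × κ) (κ × κ) ℂ) (ξ η μ χ : EuclideanSpace ℂ κ) :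
    ⟪μ, mact (Rslice V ξ η) χ⟫_ℂ = ⟪tens μ ξ, mact V (tens χ η)⟫_ℂ := by
  rw [mact_Rslice, inner_contractSnd]

lemma mem_subUp_iff {V : Matrix (κ × κ) (κ × κ) ℂ} {k μ : EuclideanSpace ℂ κ} :
    μ ∈ subUp V k ↔ mact V (tens k μ) = tens k μ := by
  simp only [subUp, LinearMap.mem_ker, LinearMap.sub_apply, LinearMap.comp_apply, sub_eq_zero]
  rfl

lemma mem_subDown_iff {V : Matrix (κ × κ) (κ × κ) ℂ} {k η : EuclideanSpace ℂ κ} :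
    η ∈ subDown V k ↔ mact V (tens η k) = tens η k := by
  simp only [subDown, LinearMap.mem_ker, LinearMap.sub_apply, LinearMap.comp_apply, sub_eq_zero]
  rfl

lemma mem_subUp_iff_mem_subDown {V : Matrix (κ × κ) (κ × κ) ℂ} {k μ : EuclideanSpace ℂ κ} :
    μ ∈ subUp V k ↔ k ∈ subDown V μ := by
  rw [mem_subUp_iff, mem_subDown_iff]

end Slice

section Legs

variable {κ : Type*} [DecidableEq κ]

lemma conjTranspose_leg12 (A : Matrix (κ × κ) (κ × κ) ℂ) : (leg12 A)ᴴ = leg12 Aᴴ := by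
  ext p q
  simp only [leg12, Matrix.conjTranspose_apply, eq_comm]
  split_ifs <;> simp

lemma conjTranspose_leg13 (A : Matrix (κ × κ) (κ × κ) ℂ) : (leg13 A)ᴴ = leg13 Aᴴ := by
  ext p q
  simp only [leg13, Matrix.conjTranspose_apply, eq_comm]
  split_ifs <;> simp

lemma conjTranspose_leg23 (A : Matrix (κ × κ) (κ × κ) ℂ) : (leg23 A)ᴴ = leg23 Aᴴ := by
  ext p q
  simp only [leg23, Matrix.conjTranspose_apply, eq_comm]
  split_ifs <;> simp

lemma leg12_one : leg12 (1 : Matrix (κ × κ) (κ × κ) ℂ) = 1 := by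
  ext ⟨a, b, c⟩ ⟨a', b', c'⟩
  simp only [leg12, Matrix.one_apply, Prod.mk.injEq]
  split_ifs <;> simp_all

variable [Fintype κ]

lemma mact_leg12_tens12 (A : Matrix (κ × κ) (κ × κ) ℂ) (w : EuclideanSpace ℂ (κ × κ))
    (c : EuclideanSpace ℂ κ) : mact (leg12 A) (tens12 w c) = tens12 (mact A w) c := by
  ext p
  simp [mact_apply, leg12, tens12, Fintype.sum_prod_type, Finset.sum_mul, mul_assoc]

lemma mact_leg23_tens23 (A : Matrix (κ × κ) (κ × κ) ℂ) (a : EuclideanSpace ℂ κ)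
    (w : EuclideanSpace ℂ (κ × κ)) : mact (leg23 A) (tens23 a w) = tens23 a (mact A w) := by
  ext p
  simp [mact_apply, leg23, tens23, Fintype.sum_prod_type, Finset.mul_sum, mul_left_comm]

lemma mact_leg13_tens13 (A : Matrix (κ × κ) (κ × κ) ℂ) (w : EuclideanSpace ℂ (κ × κ))
    (b : EuclideanSpace ℂ κ) : mact (leg13 A) (tens13 w b) = tens13 (mact A w) b := by
  ext p
  simp [mact_apply, leg13, tens13, Fintype.sum_prod_type, Finset.sum_mul, mul_assoc]

lemma leg12_mul (A B : Matrix (κ × κ) (κ × κ) ℂ) : leg12 A * leg12 B = leg12 (A * B) := by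
  ext p q
  simp [leg12, Matrix.mul_apply, Fintype.sum_prod_type]

end Legs

section MultiplicativeUnitary

variable {V : Matrix (ι × ι) (ι × ι) ℂ}

lemma inner_Lslice_of_mem_subUp (hV : Vᴴ * V = 1) {k μ : EuclideanSpace ℂ ι} (hk : ‖k‖ = 1)
    (hμ : μ ∈ subUp V k) (χ : EuclideanSpace ℂ ι) :
    ⟪μ, mact (Lslice V k k) χ⟫_ℂ = ⟪μ, χ⟫_ℂ := by
  rw [inner_mact_Lslice, inner_mact_right, mact_eq_self_of_mul_eq_one hV (mem_subUp_iff.1 hμ),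
    inner_tens, inner_self_eq_one_of_norm_eq_one hk, one_mul]

lemma inner_Rslice_of_mem_subDown (hV : Vᴴ * V = 1) {k μ : EuclideanSpace ℂ ι} (hk : ‖k‖ = 1)
    (hμ : μ ∈ subDown V k) (χ : EuclideanSpace ℂ ι) :
    ⟪μ, mact (Rslice V k k) χ⟫_ℂ = ⟪μ, χ⟫_ℂ := by
  rw [inner_mact_Rslice, inner_mact_right, mact_eq_self_of_mul_eq_one hV (mem_subDown_iff.1 hμ),
    inner_tens, inner_self_eq_one_of_norm_eq_one hk, mul_one]

lemma mem_subUp_of_Lslice_apply_eq (hV : Vᴴ * V = 1) {k μ : EuclideanSpace ℂ ι} (hk : ‖k‖ = 1)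
    (h : mact (Lslice V k k) μ = μ) : μ ∈ subUp V k := by
  refine mem_subUp_iff.2 (mact_eq_self_of_inner_eq hV ?_)
  rw [← inner_mact_Lslice, h, inner_tens, inner_self_eq_one_of_norm_eq_one hk, one_mul]

lemma mem_subDown_of_Rslice_apply_eq (hV : Vᴴ * V = 1) {k η : EuclideanSpace ℂ ι} (hk : ‖k‖ = 1)
    (h : mact (Rslice V k k) η = η) : η ∈ subDown V k := by
  refine mem_subDown_iff.2 (mact_eq_self_of_inner_eq hV ?_)
  rw [← inner_mact_Rslice, h, inner_tens, inner_self_eq_one_of_norm_eq_one hk, mul_one]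

lemma leg12_conjTranspose_mul_self (hV : Vᴴ * V = 1) : leg12 Vᴴ * leg12 V = 1 := by
  rw [leg12_mul, hV, leg12_one]

lemma pentagon_apply (hP : Pentagon V) (t : EuclideanSpace ℂ (ι × ι × ι)) :
    mact (leg12 V) (mact (leg13 V) (mact (leg23 V) t)) = mact (leg23 V) (mact (leg12 V) t) := by
  rw [← mact_mul_apply, ← mact_mul_apply, hP, mact_mul_apply]

lemma mact_leg13_leg23_of_leg12 (hV : Vᴴ * V = 1) (hP : Pentagon V)
    {t : EuclideanSpace ℂ (ι × ι × ι)} (ht : mact (leg12 V) t = t) :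
    mact (leg13 V) (mact (leg23 V) t) = mact (leg12 Vᴴ) (mact (leg23 V) t) := by
  conv_rhs => rw [← ht, ← pentagon_apply hP,
    mact_mact_of_mul_eq_one (leg12_conjTranspose_mul_self hV)]

lemma mact_tens_of_mem_subDown_of_mem_subUp (hV : Vᴴ * V = 1) (hP : Pentagon V)
    {k η μ : EuclideanSpace ℂ ι} (hk : k ≠ 0) (hη : η ∈ subDown V k) (hμ : μ ∈ subUp V k) :
    mact V (tens η μ) = tens η μ := by
  have h12 : mact (leg12 V) (tens12 (tens η k) μ) = tens12 (tens η k) μ := by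
    rw [mact_leg12_tens12, mem_subDown_iff.1 hη]
  have h23 : mact (leg23 V) (tens12 (tens η k) μ) = tens12 (tens η k) μ := by
    rw [← tens23_tens, mact_leg23_tens23, mem_subUp_iff.1 hμ]
  have h13 : mact (leg13 V) (tens12 (tens η k) μ) = tens12 (tens η k) μ := by
    have h := mact_leg13_leg23_of_leg12 hV hP h12
    rwa [h23, mact_eq_self_of_mul_eq_one (leg12_conjTranspose_mul_self hV) h12] at h
  rw [← tens13_tens, mact_leg13_tens13] at h13
  refine ext_inner_left ℂ fun z => mul_right_cancel₀ (inner_self_ne_zero.2 hk) ?_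
  rw [← inner_tens13, ← inner_tens13, h13]

lemma Lslice_apply_mem_subDown (hP : Pentagon V) {k F : EuclideanSpace ℂ ι}
    (hkk : k ∈ subUp V k) (hF : F ∈ subDown V k) : mact (Lslice V k k) F ∈ subDown V k := by
  set t := tens12 (tens k F) k with ht
  have h13 : mact (leg13 V) t = t := by
    rw [ht, ← tens13_tens, mact_leg13_tens13, mem_subUp_iff.1 hkk]
  have h23 : mact (leg23 V) t = t := by
    rw [ht, ← tens23_tens, mact_leg23_tens23, mem_subDown_iff.1 hF]
  have hpent : mact (leg23 V) (mact (leg12 V) t) = mact (leg12 V) t := by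
    rw [← pentagon_apply hP, h23, h13]
  refine mem_subDown_iff.2 (ext_inner_left ℂ fun z => ?_)
  calc ⟪z, mact V (tens (mact (Lslice V k k) F) k)⟫_ℂ
      = ⟪tens23 k (mact Vᴴ z), mact (leg12 V) t⟫_ℂ := by
        rw [inner_mact_right, mact_Lslice, inner_tens_contractFst_left, mact_leg12_tens12]
    _ = ⟪tens23 k z, mact (leg23 V) (mact (leg12 V) t)⟫_ℂ := by
        rw [← mact_leg23_tens23, inner_mact_left, conjTranspose_leg23,
          Matrix.conjTranspose_conjTranspose]
    _ = ⟪z, tens (mact (Lslice V k k) F) k⟫_ℂ := by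
        rw [hpent, mact_leg12_tens12, mact_Lslice, inner_tens_contractFst_left]

lemma Lslice_apply_Lslice_apply (hV : Vᴴ * V = 1) (hP : Pentagon V) {k : EuclideanSpace ℂ ι}
    (hk : ‖k‖ = 1) (hkk : k ∈ subUp V k) (χ : EuclideanSpace ℂ ι) :
    mact (Lslice V k k) (mact (Lslice V k k) χ) = mact (Lslice V k k) χ := by
  refine ext_inner_left ℂ fun μ => ?_
  set t := tens23 k (tens k χ) with ht_def
  set t' := tens13 (tens k μ) k with ht'_def
  have ht : mact (leg12 V) t = t := by
    rw [ht_def, tens23_tens, mact_leg12_tens12, mem_subUp_iff.1 hkk]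
  have ht' : mact (leg12 V) t' = t' := by
    rw [ht'_def, tens13_tens, mact_leg12_tens12, mem_subUp_iff.1 hkk]
  calc ⟪μ, mact (Lslice V k k) (mact (Lslice V k k) χ)⟫_ℂ
      = ⟪mact (leg13 Vᴴ) t', mact (leg23 V) t⟫_ℂ := by
        rw [inner_mact_Lslice, inner_mact_right, mact_Lslice V k k χ, inner_tens_contractFst_right,
          mact_leg13_tens13, mact_leg23_tens23]
    _ = ⟪t', mact (leg12 Vᴴ) (mact (leg23 V) t)⟫_ℂ := by
        rw [inner_mact_left, conjTranspose_leg13, Matrix.conjTranspose_conjTranspose,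
          mact_leg13_leg23_of_leg12 hV hP ht]
    _ = ⟪μ, mact (Lslice V k k) χ⟫_ℂ := by
        rw [inner_mact_right, conjTranspose_leg12, Matrix.conjTranspose_conjTranspose, ht',
          ht'_def, ht_def, tens13_tens, ← tens23_tens, mact_leg23_tens23, inner_tens23,
          inner_self_eq_one_of_norm_eq_one hk, one_mul, inner_mact_Lslice]

lemma Rslice_apply_Rslice_apply (hV : Vᴴ * V = 1) (hP : Pentagon V) {k : EuclideanSpace ℂ ι}
    (hk : ‖k‖ = 1) (hkk : k ∈ subDown V k) (χ : EuclideanSpace ℂ ι) :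
    mact (Rslice V k k) (mact (Rslice V k k) χ) = mact (Rslice V k k) χ := by
  refine ext_inner_left ℂ fun μ => ?_
  set t := tens13 (tens χ k) k with ht_def
  set t' := tens12 (tens μ k) k with ht'_def
  have ht : mact (leg23 V) t = t := by
    rw [ht_def, tens13_tens, ← tens23_tens, mact_leg23_tens23, mem_subDown_iff.1 hkk]
  have ht' : mact (leg23 Vᴴ) t' = t' := by
    rw [ht'_def, ← tens23_tens, mact_leg23_tens23,
      mact_eq_self_of_mul_eq_one hV (mem_subDown_iff.1 hkk)]
  calc ⟪μ, mact (Rslice V k k) (mact (Rslice V k k) χ)⟫_ℂ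
      = ⟪mact (leg12 Vᴴ) t', mact (leg13 V) t⟫_ℂ := by
        rw [inner_mact_Rslice, inner_mact_right, mact_Rslice V k k χ, inner_tens_contractSnd_left,
          mact_leg12_tens12, mact_leg13_tens13]
    _ = ⟪t', mact (leg23 V) (mact (leg12 V) t)⟫_ℂ := by
        rw [inner_mact_left, conjTranspose_leg12, Matrix.conjTranspose_conjTranspose,
          ← pentagon_apply hP, ht]
    _ = ⟪μ, mact (Rslice V k k) χ⟫_ℂ := by
        rw [inner_mact_right, conjTranspose_leg23, ht', ht'_def, ht_def, tens13_tens,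
          mact_leg12_tens12, inner_tens12, inner_self_eq_one_of_norm_eq_one hk, mul_one, inner_mact_Rslice]

lemma Lslice_apply_mem_subUp (hV : Vᴴ * V = 1) (hP : Pentagon V) {k : EuclideanSpace ℂ ι}
    (hk : ‖k‖ = 1) (hkk : k ∈ subUp V k) (χ : EuclideanSpace ℂ ι) :
    mact (Lslice V k k) χ ∈ subUp V k :=
  mem_subUp_of_Lslice_apply_eq hV hk (Lslice_apply_Lslice_apply hV hP hk hkk χ)

lemma Rslice_apply_mem_subDown (hV : Vᴴ * V = 1) (hP : Pentagon V) {k : EuclideanSpace ℂ ι}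
    (hk : ‖k‖ = 1) (hkk : k ∈ subDown V k) (χ : EuclideanSpace ℂ ι) :
    mact (Rslice V k k) χ ∈ subDown V k :=
  mem_subDown_of_Rslice_apply_eq hV hk (Rslice_apply_Rslice_apply hV hP hk hkk χ)

end MultiplicativeUnitary

section MultiplicityOne

variable {V : Matrix (ι × ι) (ι × ι) ℂ} {e : EuclideanSpace ℂ ι}

lemma Rslice_apply_eq_inner_smul (hV : Vᴴ * V = 1) (hP : Pentagon V) (he : ‖e‖ = 1)
    (hfix : Fixed V e) (huniq : ∀ ξ, Fixed V ξ → ∃ c : ℂ, ξ = c • e) (χ : EuclideanSpace ℂ ι) :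
    mact (Rslice V e e) χ = ⟪e, χ⟫_ℂ • e := by
  have hee : e ∈ subDown V e := mem_subDown_iff.2 (hfix e)
  have he0 : e ≠ 0 := norm_ne_zero_iff.1 (by rw [he]; exact one_ne_zero)
  obtain ⟨c, hc⟩ := huniq (mact (Rslice V e e) χ) fun η =>
    mact_tens_of_mem_subDown_of_mem_subUp hV hP he0 (Rslice_apply_mem_subDown hV hP he hee χ)
      (mem_subUp_iff.2 (hfix η))
  have hce : c = ⟪e, χ⟫_ℂ := by
    rw [← inner_Rslice_of_mem_subDown hV he hee χ, hc, inner_smul_right,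
      inner_self_eq_one_of_norm_eq_one he, mul_one]
  rw [hc, hce]

lemma Lslice_apply_eq_zero_of_inner_eq_zero (hV : Vᴴ * V = 1) (hP : Pentagon V) (he : ‖e‖ = 1)
    (hfix : Fixed V e) (huniq : ∀ ξ, Fixed V ξ → ∃ c : ℂ, ξ = c • e) {h : EuclideanSpace ℂ ι}
    (hh : ‖h‖ = 1) (hhh : h ∈ subUp V h) (heh : ⟪e, h⟫_ℂ = 0) :
    mact (Lslice V h h) e = 0 := by
  set z := mact (Lslice V h h) e
  have hez : ⟪e, z⟫_ℂ = 0 := by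
    rw [inner_mact_Lslice, ← inner_mact_Rslice, Rslice_apply_eq_inner_smul hV hP he hfix huniq,
      inner_smul_right, heh, zero_mul]
  rw [← inner_self_eq_zero (𝕜 := ℂ),
    inner_Lslice_of_mem_subUp hV hh (Lslice_apply_mem_subUp hV hP hh hhh e) e,
    ← inner_conj_symm, hez, map_zero]

lemma eq_zero_of_mem_subUp_of_mem_subDown (hV : Vᴴ * V = 1) (hP : Pentagon V) (he : ‖e‖ = 1)
    (hfix : Fixed V e) (huniq : ∀ ξ, Fixed V ξ → ∃ c : ℂ, ξ = c • e) {k y : EuclideanSpace ℂ ι}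
    (hke : ⟪k, e⟫_ℂ ≠ 0) (hyU : y ∈ subUp V k) (hyD : y ∈ subDown V k) (hey : ⟪e, y⟫_ℂ = 0) :
    y = 0 := by
  by_contra hy
  set h := (‖y‖⁻¹ : ℂ) • y
  have hk0 : k ≠ 0 := by
    rintro rfl
    exact hke (inner_zero_left e)
  have hhU : h ∈ subUp V k := Submodule.smul_mem _ _ hyU
  have hhD : h ∈ subDown V k := Submodule.smul_mem _ _ hyD
  have hh : ‖h‖ = 1 := norm_smul_inv_norm hy
  have hhh : h ∈ subUp V h :=
    mem_subUp_iff.2 (mact_tens_of_mem_subDown_of_mem_subUp hV hP hk0 hhD hhU)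
  have heh : ⟪e, h⟫_ℂ = 0 := by rw [inner_smul_right, hey, mul_zero]
  apply hke
  rw [← inner_Lslice_of_mem_subUp hV hh (mem_subUp_iff_mem_subDown.2 hhD) e,
    Lslice_apply_eq_zero_of_inner_eq_zero hV hP he hfix huniq hh hhh heh, inner_zero_right]

lemma Lslice_apply_eq_inner_smul (hV : Vᴴ * V = 1) (hP : Pentagon V) (he : ‖e‖ = 1)
    (hfix : Fixed V e) (huniq : ∀ ξ, Fixed V ξ → ∃ c : ℂ, ξ = c • e) {k F : EuclideanSpace ℂ ι}
    (hk : ‖k‖ = 1) (hke : ⟪k, e⟫_ℂ ≠ 0) (hkk : k ∈ subUp V k) (hF : F ∈ subDown V k) :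
    mact (Lslice V k k) F = ⟪k, F⟫_ℂ • k := by
  have hek : ⟪e, k⟫_ℂ ≠ 0 := fun h => hke (inner_eq_zero_symm.1 h)
  have hkk' : k ∈ subDown V k := mem_subDown_iff.2 (mem_subUp_iff.1 hkk)
  set x := mact (Lslice V k k) F with hx
  obtain ⟨c, hc⟩ : ∃ c : ℂ, x = c • k := by
    refine ⟨⟪e, x⟫_ℂ / ⟪e, k⟫_ℂ, sub_eq_zero.1 ?_⟩
    refine eq_zero_of_mem_subUp_of_mem_subDown hV hP he hfix huniq hke
      (Submodule.sub_mem _ (Lslice_apply_mem_subUp hV hP hk hkk F) (Submodule.smul_mem _ _ hkk))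
      (Submodule.sub_mem _ (Lslice_apply_mem_subDown hP hkk hF) (Submodule.smul_mem _ _ hkk'))
      ?_
    rw [inner_sub_right, inner_smul_right, div_mul_cancel₀ _ hek, sub_self]
  have hck : c = ⟪k, F⟫_ℂ := by
    rw [← inner_Lslice_of_mem_subUp hV hk hkk F, ← hx, hc, inner_smul_right,
      inner_self_eq_one_of_norm_eq_one hk, mul_one]
  rw [hc, hck]

end MultiplicityOne

theorem Lslice_apply_of_prec_general {ι : Type*} [Fintype ι] [DecidableEq ι]
    (V : Matrix (ι × ι) (ι × ι) ℂ) (hV : IsMU V)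
    (e eHat : EuclideanSpace ℂ ι) (hm : Mult1 V e eHat)
    (f g : EuclideanSpace ℂ ι) (hf : IsPreSubgroup V e f) (hg : IsPreSubgroup V e g)
    (hgf : mact V (tens f g) = tens f g) :
    appM (Lslice V g g) f = ⟪g, f⟫_ℂ • g ∧ ⟪g, e⟫_ℂ = ⟪g, f⟫_ℂ * ⟪f, e⟫_ℂ := by
  obtain ⟨-, hU, hP⟩ := hV
  obtain ⟨he, -, hfix, -, huniq, -⟩ := hm
  obtain ⟨hf1, hfe, hff⟩ := hf
  obtain ⟨hg1, hge, hgg⟩ := hg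
  have hLf : mact (Lslice V f f) e = ⟪f, e⟫_ℂ • f :=
    Lslice_apply_eq_inner_smul hU hP he hfix huniq hf1 hfe.ne' (mem_subUp_iff.2 hff)
      (mem_subDown_iff.2 (hfix f))
  refine ⟨Lslice_apply_eq_inner_smul hU hP he hfix huniq hg1 hge.ne' (mem_subUp_iff.2 hgg)
    (mem_subDown_iff.2 hgf), ?_⟩
  rw [← inner_Lslice_of_mem_subUp hU hf1 (mem_subUp_iff.2 hgf) e, hLf, inner_smul_right, mul_comm]

/-- if `g ≺ f` then `L_g f = ⟨g,f⟩ g` and `⟨g,e⟩ = ⟨g,f⟩⟨f,e⟩`. -/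
theorem Lslice_apply_of_prec {ι : Type*} [Fintype ι] [DecidableEq ι] [Nonempty ι]
    (V : Matrix (ι × ι) (ι × ι) ℂ) (hV : IsMU V)
    (e eHat : EuclideanSpace ℂ ι) (hm : Mult1 V e eHat)
    (f g : EuclideanSpace ℂ ι) (hf : IsPreSubgroup V e f) (hg : IsPreSubgroup V e g)
    (hgf : mact V (tens f g) = tens f g) :
    appM (Lslice V g g) f = ⟪g, f⟫_ℂ • g ∧ ⟪g, e⟫_ℂ = ⟪g, f⟫_ℂ * ⟪f, e⟫_ℂ :=
  Lslice_apply_of_prec_general V hV e eHat hm f g hf hg hgf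

end MU
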